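/- arXiv:quant-ph/0408125 — 7 statements merged into one kernel-verified Lean document; each statement's English description precedes it below -/
import Mathlib

section
/- Let ρ be a density matrix on ℂ^s ⊗ ℂ^f, let (A_i)_{i∈I} be a projective measurement on ℂ^s and (X_j)_{j∈J} a projective measurement on ℂ^f (I, J finite), and let p(i,j) = Re Tr((A_i ⊗ X_j) ρ) be the joint outcome distribution. If the conditional entropy of the A-outcome given the X-outcome vanishes, H(A|X) = 0 (equivalently I(A:X) = H(A)), then there exists a map f : J → I such that: (i) p(i,j) = 0 whenever i ≠ f(j); (ii) the coarse-grained family X'_i := ∑_{j : f(j)=i} X_j is again a projective measurement on ℂ^f; and (iii) the joint distribution q(i,i') = Re Tr((A_i ⊗ X'_{i'}) ρ) is supported on the diagonal, i.e. q(i,i') = 0 for all i ≠ i', so that both H(A|X') = 0 and H(X'|A) = 0. -/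
open Matrix Kronecker BigOperators ComplexOrder

noncomputable section

/-- A density matrix: positive semidefinite with trace 1. -/
def IsDensityMatrix {n : Type*} [Fintype n] (ρ : Matrix n n ℂ) : Prop :=
  ρ.PosSemidef ∧ ρ.trace = 1

/-- A projective measurement: a finite family of Hermitian, mutually orthogonal
idempotents summing to the identity. -/
def IsProjMeasurement {ι n : Type*} [Fintype ι] [DecidableEq ι] [Fintype n] [DecidableEq n]
    (P : ι → Matrix n n ℂ) : Prop :=
  (∀ k, (P k).IsHermitian) ∧
  (∀ k l, P k * P l = if k = l then P k else 0) ∧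
  (∑ k, P k = 1)

/-- Conditional entropy H(1|2) of a joint pmf `p` on `I × J`:
`H(1|2) = −∑_{i,j} p(i,j) ln(p(i,j)/p₂(j))`, terms with `p(i,j) = 0` contributing 0. -/
def condEntropy {I J : Type*} [Fintype I] [Fintype J] (p : I → J → ℝ) : ℝ :=
  -∑ i, ∑ j, if p i j = 0 then 0 else p i j * Real.log (p i j / ∑ i', p i' j)

lemma kron_conjT {a b : Type*} [Fintype a] [Fintype b]
    (M : Matrix a a ℂ) (N : Matrix b b ℂ) : (M ⊗ₖ N)ᴴ = Mᴴ ⊗ₖ Nᴴ := by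
  ext ⟨i, j⟩ ⟨k, l⟩
  simp [conjTranspose_apply, kronecker_apply]

open scoped MatrixOrder Matrix.Norms.L2Operator in
lemma psd_exists_sq {a : Type*} [Fintype a] [DecidableEq a] {M : Matrix a a ℂ}
    (hM : M.PosSemidef) : ∃ B : Matrix a a ℂ, M = Bᴴ * B := by
  obtain ⟨B, hB⟩ := CStarAlgebra.nonneg_iff_eq_star_mul_self.mp hM.nonneg
  exact ⟨B, by rw [hB, star_eq_conjTranspose]⟩

lemma kron_psd {a b : Type*} [Fintype a] [Fintype b] [DecidableEq a] [DecidableEq b]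
    {M : Matrix a a ℂ} {N : Matrix b b ℂ} (hM : M.PosSemidef) (hN : N.PosSemidef) :
    (M ⊗ₖ N).PosSemidef := by
  obtain ⟨B, rfl⟩ := psd_exists_sq hM
  obtain ⟨C, rfl⟩ := psd_exists_sq hN
  rw [Matrix.mul_kronecker_mul, ← kron_conjT]
  exact Matrix.posSemidef_conjTranspose_mul_self _

lemma psd_trace_nonneg {a : Type*} [Fintype a] [DecidableEq a] {M : Matrix a a ℂ}
    (hM : M.PosSemidef) : 0 ≤ M.trace := by
  rw [Matrix.trace]
  apply Finset.sum_nonneg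
  intro i _
  exact hM.diag_nonneg

lemma psd_mul_trace_nonneg {a : Type*} [Fintype a] [DecidableEq a] {M N : Matrix a a ℂ}
    (hM : M.PosSemidef) (hN : N.PosSemidef) : 0 ≤ ((M * N).trace).re := by
  obtain ⟨B, rfl⟩ := psd_exists_sq hN
  have h : (M * (Bᴴ * B)).trace = (B * M * Bᴴ).trace := by
    rw [← Matrix.mul_assoc, Matrix.trace_mul_cycle]
  rw [h]
  have := psd_trace_nonneg (hM.mul_mul_conjTranspose_same B)
  exact (Complex.le_def.mp this).1

lemma kron_sum_right {a b J : Type*} [Fintype a] [Fintype b] [Fintype J]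
    (M : Matrix a a ℂ) (N : J → Matrix b b ℂ) :
    M ⊗ₖ (∑ j, N j) = ∑ j, M ⊗ₖ N j := by
  classical
  induction (Finset.univ : Finset J) using Finset.induction with
  | empty => simp [Matrix.kronecker_zero]
  | insert x t h ih => rw [Finset.sum_insert h, Finset.sum_insert h, Matrix.kronecker_add, ih]

lemma condEntropy_of_diag {I : Type*} [Fintype I] [DecidableEq I] (q : I → I → ℝ)
    (h : ∀ i i', i ≠ i' → q i i' = 0) : condEntropy q = 0 := by
  unfold condEntropy
  rw [neg_eq_zero]
  apply Finset.sum_eq_zero; intro i _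
  apply Finset.sum_eq_zero; intro i' _
  by_cases hq : q i i' = 0
  · simp [hq]
  · have hii : i = i' := by by_contra hc; exact hq (h _ _ hc)
    subst hii
    have hsum : ∑ i'', q i'' i = q i i :=
      Finset.sum_eq_single_of_mem i (Finset.mem_univ i) (fun b _ hb => h b i hb)
    simp [hq, hsum, div_self hq, Real.log_one]

/-- Lemma 1 (duality of perfect records): if `H(A|X) = 0` then `X` can be coarse grained
along a map `f : J → I` into a projective measurement `X'` whose joint distribution with
`A` is supported on the diagonal, so that `H(A|X') = 0` and `H(X'|A) = 0`. -/
theorem stmt_0 {s fdim : ℕ} {I J : Type*}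
    [Fintype I] [DecidableEq I] [Fintype J] [DecidableEq J]
    (ρ : Matrix (Fin s × Fin fdim) (Fin s × Fin fdim) ℂ) (hρ : IsDensityMatrix ρ)
    (A : I → Matrix (Fin s) (Fin s) ℂ) (hA : IsProjMeasurement A)
    (X : J → Matrix (Fin fdim) (Fin fdim) ℂ) (hX : IsProjMeasurement X)
    (p : I → J → ℝ) (hp : ∀ i j, p i j = (((A i ⊗ₖ X j) * ρ).trace).re)
    (hH : condEntropy p = 0) :
    ∃ f : J → I,
      (∀ i j, i ≠ f j → p i j = 0) ∧
      IsProjMeasurement (fun i : I => ∑ j, if f j = i then X j else 0) ∧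
      (∀ i i' : I, i ≠ i' →
        (((A i ⊗ₖ ∑ j, if f j = i' then X j else 0) * ρ).trace).re = 0) ∧
      condEntropy (fun i i' : I =>
        (((A i ⊗ₖ ∑ j, if f j = i' then X j else 0) * ρ).trace).re) = 0 ∧
      condEntropy (fun i' i : I =>
        (((A i ⊗ₖ ∑ j, if f j = i' then X j else 0) * ρ).trace).re) = 0 := by
  classical
  have hApsd : ∀ i, (A i).PosSemidef := by
    intro i
    have h2 : A i * A i = A i := by simpa using hA.2.1 i i
    have hh : (A i)ᴴ = A i := hA.1 i
    have h3 : (A i)ᴴ * A i = A i := by rw [hh, h2]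
    rw [← h3]
    exact Matrix.posSemidef_conjTranspose_mul_self _
  have hXpsd : ∀ j, (X j).PosSemidef := by
    intro j
    have h2 : X j * X j = X j := by simpa using hX.2.1 j j
    have hh : (X j)ᴴ = X j := hX.1 j
    have h3 : (X j)ᴴ * X j = X j := by rw [hh, h2]
    rw [← h3]
    exact Matrix.posSemidef_conjTranspose_mul_self _
  have hpos : ∀ i j, 0 ≤ p i j := by
    intro i j
    rw [hp i j]
    exact psd_mul_trace_nonneg (kron_psd (hApsd i) (hXpsd j)) hρ.1
  -- each entropy term is zero
  have hle : ∀ i j, (if p i j = 0 then 0 else p i j * Real.log (p i j / ∑ i', p i' j)) ≤ 0 := by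
    intro i j
    by_cases h0 : p i j = 0
    · simp [h0]
    · rw [if_neg h0]
      have hpij : 0 < p i j := lt_of_le_of_ne (hpos i j) (Ne.symm h0)
      have hp2 : p i j ≤ ∑ i', p i' j :=
        Finset.single_le_sum (fun i' _ => hpos i' j) (Finset.mem_univ i)
      have hp2pos : 0 < ∑ i', p i' j := lt_of_lt_of_le hpij hp2
      have hlog : Real.log (p i j / ∑ i', p i' j) ≤ 0 :=
        Real.log_nonpos (by positivity) ((div_le_one hp2pos).mpr hp2)
      exact mul_nonpos_of_nonneg_of_nonpos (hpos i j) hlog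
  have hterm : ∀ i j, (if p i j = 0 then 0 else p i j * Real.log (p i j / ∑ i', p i' j)) = 0 := by
    have hsum : ∑ i, ∑ j, (if p i j = 0 then 0 else p i j * Real.log (p i j / ∑ i', p i' j)) = 0 := by
      have := hH
      unfold condEntropy at this
      linarith
    intro i j
    have h1 := (Finset.sum_eq_zero_iff_of_nonpos
      (fun i (_ : i ∈ Finset.univ) => Finset.sum_nonpos (fun j _ => hle i j))).mp hsum
    exact (Finset.sum_eq_zero_iff_of_nonpos (fun j _ => hle i j)).mp
      (h1 i (Finset.mem_univ i)) j (Finset.mem_univ j)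
  have hkey : ∀ i j, p i j ≠ 0 → p i j = ∑ i', p i' j := by
    intro i j h0
    have ht := hterm i j
    rw [if_neg h0] at ht
    have hlog : Real.log (p i j / ∑ i', p i' j) = 0 := by
      rcases mul_eq_zero.mp ht with h | h
      · exact absurd h h0
      · exact h
    have hpij : 0 < p i j := lt_of_le_of_ne (hpos i j) (Ne.symm h0)
    have hp2pos : 0 < ∑ i', p i' j := lt_of_lt_of_le hpij
      (Finset.single_le_sum (fun i' _ => hpos i' j) (Finset.mem_univ i))
    have hratio : p i j / ∑ i', p i' j = 1 := by
      rcases Real.log_eq_zero.mp hlog with h | h | h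
      · exact absurd h (div_pos hpij hp2pos).ne'
      · exact h
      · exfalso; linarith [div_pos hpij hp2pos]
    field_simp at hratio
    exact hratio
  -- I nonempty
  have hI : Nonempty I := by
    by_contra hne
    have hIe : IsEmpty I := not_nonempty_iff.mp hne
    have h1 : (1 : Matrix (Fin s) (Fin s) ℂ) = 0 := by
      rw [← hA.2.2]
      simp [Finset.univ_eq_empty]
    have hs0 : s = 0 := by
      by_contra hs
      have h00 := congrFun (congrFun h1 ⟨0, Nat.pos_of_ne_zero hs⟩) ⟨0, Nat.pos_of_ne_zero hs⟩
      simp [Matrix.one_apply] at h00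
    have htr : ρ.trace = 0 := by
      subst hs0
      rw [Matrix.trace]
      simp
    rw [hρ.2] at htr
    exact one_ne_zero htr
  let f : J → I := fun j => if h : ∃ i, p i j ≠ 0 then h.choose else hI.some
  have hfspec : ∀ j (hj : ∃ i, p i j ≠ 0), p (f j) j ≠ 0 := by
    intro j hj
    show p (if h : ∃ i, p i j ≠ 0 then h.choose else hI.some) j ≠ 0
    rw [dif_pos hj]
    exact hj.choose_spec
  have hzero : ∀ i j, i ≠ f j → p i j = 0 := by
    intro i j hij
    by_contra h0
    have hfj := hfspec j ⟨i, h0⟩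
    have hpeq := hkey i j h0
    have hadd := Finset.add_sum_erase Finset.univ (fun i' => p i' j) (Finset.mem_univ i)
    have hrest : ∑ i' ∈ Finset.univ.erase i, p i' j = 0 := by linarith
    have hmem : f j ∈ Finset.univ.erase i :=
      Finset.mem_erase.mpr ⟨fun h => hij h.symm, Finset.mem_univ _⟩
    exact hfj ((Finset.sum_eq_zero_iff_of_nonneg (fun i' _ => hpos i' j)).mp hrest _ hmem)
  -- coarse-grained measurement
  have hXherm : ∀ i : I, (∑ j, if f j = i then X j else 0).IsHermitian := by
    intro i
    show (∑ j, if f j = i then X j else 0)ᴴ = _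
    rw [Matrix.conjTranspose_sum]
    refine Finset.sum_congr rfl fun j _ => ?_
    by_cases h : f j = i <;> simp [h, (hX.1 j).eq]
  have hXortho : ∀ k l : I, (∑ j, if f j = k then X j else 0) * (∑ j, if f j = l then X j else 0)
      = if k = l then (∑ j, if f j = k then X j else 0) else 0 := by
    intro k l
    rw [Finset.sum_mul]
    have hterm2 : ∀ j, (if f j = k then X j else 0) * (∑ j', if f j' = l then X j' else 0)
        = if k = l then (if f j = k then X j else 0) else 0 := by
      intro j
      rw [Finset.mul_sum]
      have h2 : ∀ j', (if f j = k then X j else 0) * (if f j' = l then X j' else 0)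
          = if j' = j then (if f j = k then (if f j = l then X j else 0) else 0) else 0 := by
        intro j'
        simp only [ite_mul, mul_ite, mul_zero, zero_mul, hX.2.1 j j']
        by_cases h3 : j' = j
        · subst h3
          by_cases h4 : f j' = k <;> by_cases h5 : f j' = l <;> simp [h4, h5]
        · simp [h3, Ne.symm h3]
      rw [Finset.sum_congr rfl (fun j' _ => h2 j')]
      rw [Finset.sum_ite_eq' Finset.univ j]
      simp only [Finset.mem_univ, if_true]
      by_cases h1 : f j = k
      · subst h1
        by_cases hkl : f j = l <;> simp [hkl]
      · simp [h1]
    rw [Finset.sum_congr rfl (fun j _ => hterm2 j)]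
    by_cases hkl : k = l <;> simp [hkl]
  have hXsum : ∑ i : I, ∑ j, (if f j = i then X j else 0) = 1 := by
    rw [Finset.sum_comm]
    calc ∑ j, ∑ i : I, (if f j = i then X j else 0)
        = ∑ j, X j := by
          refine Finset.sum_congr rfl fun j _ => ?_
          simp [Finset.sum_ite_eq]
      _ = 1 := hX.2.2
  -- joint distribution with coarse graining
  have hq : ∀ i i' : I, (((A i ⊗ₖ ∑ j, if f j = i' then X j else 0) * ρ).trace).re
      = ∑ j, if f j = i' then p i j else 0 := by
    intro i i'
    rw [kron_sum_right, Finset.sum_mul, Matrix.trace_sum, Complex.re_sum]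
    refine Finset.sum_congr rfl fun j _ => ?_
    by_cases h : f j = i'
    · simp only [h, if_true]
      exact (hp i j).symm
    · simp [h, Matrix.kronecker_zero]
  have hdiag : ∀ i i' : I, i ≠ i' →
      (((A i ⊗ₖ ∑ j, if f j = i' then X j else 0) * ρ).trace).re = 0 := by
    intro i i' hne
    rw [hq]
    apply Finset.sum_eq_zero
    intro j _
    by_cases h : f j = i'
    · rw [if_pos h]
      exact hzero i j (by rw [h]; exact hne)
    · rw [if_neg h]
  refine ⟨f, hzero, ⟨hXherm, hXortho, hXsum⟩, hdiag, ?_, ?_⟩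
  · exact condEntropy_of_diag _ hdiag
  · exact condEntropy_of_diag _ (fun a b hab => hdiag b a (fun h => hab h.symm))
end
end

section
/- Let ρ be a density matrix on ℂ^s ⊗ ℂ^f, and let (A_i)_{i∈I} and (X_i)_{i∈I} be projective measurements on ℂ^s and ℂ^f respectively, indexed by the same finite set I, such that Re Tr((A_i ⊗ X_j) ρ) = 0 whenever i ≠ j. Then for every j ∈ I the following three matrices are equal: (1 ⊗ X_j) ρ (1 ⊗ X_j) = (A_j ⊗ X_j) ρ (A_j ⊗ X_j) = (A_j ⊗ 1) ρ (A_j ⊗ 1). In particular, the indirect measurement X_j has exactly the same physical effect on the joint state as the direct measurement A_j. -/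
open Matrix Kronecker BigOperators ComplexOrder

noncomputable section

/-- If `Re (trace (Mᴴ M)) = 0` then `M = 0`. -/
lemma aux_eq_zero_of_trace {n : Type*} [Fintype n] (M : Matrix n n ℂ)
    (h : ((Mᴴ * M).trace).re = 0) : M = 0 := by
  have htr : ((Mᴴ * M).trace).re = ∑ j, ∑ i, Complex.normSq (M i j) := by
    simp only [Matrix.trace, Matrix.diag, Matrix.mul_apply, Matrix.conjTranspose_apply]
    rw [Complex.re_sum]
    refine Finset.sum_congr rfl fun j _ => ?_
    rw [Complex.re_sum]
    refine Finset.sum_congr rfl fun i _ => ?_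
    rw [mul_comm, Complex.star_def, Complex.mul_conj]
    simp
  rw [htr] at h
  ext i j
  have h1 := (Finset.sum_eq_zero_iff_of_nonneg (fun j _ => Finset.sum_nonneg
    (fun i _ => Complex.normSq_nonneg (M i j)))).mp h j (Finset.mem_univ j)
  have h2 := (Finset.sum_eq_zero_iff_of_nonneg
    (fun i _ => Complex.normSq_nonneg (M i j))).mp h1 i (Finset.mem_univ i)
  simpa using Complex.normSq_eq_zero.mp h2

open scoped MatrixOrder

/-- Key lemma: if `P` is a Hermitian idempotent, `ρ` is PSD, and
`Re (trace (P ρ)) = 0`, then `P ρ = 0`. -/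
lemma aux_proj_mul_eq_zero {n : Type*} [Fintype n] [DecidableEq n] (P ρ : Matrix n n ℂ)
    (hP : P.IsHermitian) (hP2 : P * P = P) (hρ : ρ.PosSemidef)
    (h : ((P * ρ).trace).re = 0) : P * ρ = 0 := by
  set S := CFC.sqrt ρ with hSdef
  have hSS : S * S = ρ := CFC.sqrt_mul_sqrt_self ρ hρ.nonneg
  have hSH : Sᴴ = S := (CFC.sqrt_nonneg ρ).posSemidef.isHermitian
  have hPS : P * S = 0 := by
    apply aux_eq_zero_of_trace
    have key : ((P * S)ᴴ * (P * S)).trace = ((P * ρ)).trace := by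
      rw [Matrix.conjTranspose_mul, hSH, hP.eq]
      calc (S * P * (P * S)).trace = (S * (P * (P * S))).trace := by
            rw [Matrix.mul_assoc]
          _ = ((P * (P * S)) * S).trace := by rw [Matrix.trace_mul_comm]
          _ = (P * ρ).trace := by
            rw [← Matrix.mul_assoc, hP2, Matrix.mul_assoc, hSS]
    rw [key]; exact h
  calc P * ρ = P * S * S := by rw [Matrix.mul_assoc, hSS]
    _ = 0 := by rw [hPS, Matrix.zero_mul]

lemma aux_sum_kronecker {ι m n : Type*} [Fintype ι] [Fintype m] [Fintype n]
    (A : ι → Matrix m m ℂ) (B : Matrix n n ℂ) :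
    (∑ i, A i) ⊗ₖ B = ∑ i, (A i ⊗ₖ B) := by
  ext ⟨a, b⟩ ⟨c, d⟩
  simp [Matrix.sum_apply, Finset.sum_mul]

lemma aux_kronecker_sum {ι m n : Type*} [Fintype ι] [Fintype m] [Fintype n]
    (A : Matrix m m ℂ) (B : ι → Matrix n n ℂ) :
    A ⊗ₖ (∑ i, B i) = ∑ i, (A ⊗ₖ B i) := by
  ext ⟨a, b⟩ ⟨c, d⟩
  simp [Matrix.sum_apply, Finset.mul_sum]

lemma aux_kron_herm {m n : Type*} [Fintype m] [Fintype n]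
    {A : Matrix m m ℂ} {B : Matrix n n ℂ} (hA : A.IsHermitian) (hB : B.IsHermitian) :
    (A ⊗ₖ B).IsHermitian := by
  apply Matrix.IsHermitian.ext
  rintro ⟨a, b⟩ ⟨c, d⟩
  simp only [Matrix.kroneckerMap_apply, star_mul']
  rw [hA.apply, hB.apply]

/-- Corollary 1: the indirect measurement `X j` has exactly the same physical effect
on the joint state as the direct measurement `A j`. -/
theorem stmt_1 {s f : ℕ} {I : Type*} [Fintype I] [DecidableEq I]
    (ρ : Matrix (Fin s × Fin f) (Fin s × Fin f) ℂ) (hρ : IsDensityMatrix ρ)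
    (A : I → Matrix (Fin s) (Fin s) ℂ) (hA : IsProjMeasurement A)
    (X : I → Matrix (Fin f) (Fin f) ℂ) (hX : IsProjMeasurement X)
    (hcorr : ∀ i j, i ≠ j → (((A i ⊗ₖ X j) * ρ).trace).re = 0) (j : I) :
    ((1 : Matrix (Fin s) (Fin s) ℂ) ⊗ₖ X j) * ρ * ((1 : Matrix (Fin s) (Fin s) ℂ) ⊗ₖ X j)
      = (A j ⊗ₖ X j) * ρ * (A j ⊗ₖ X j) ∧
    (A j ⊗ₖ X j) * ρ * (A j ⊗ₖ X j)
      = (A j ⊗ₖ (1 : Matrix (Fin f) (Fin f) ℂ)) * ρ * (A j ⊗ₖ (1 : Matrix (Fin f) (Fin f) ℂ)) := by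
  obtain ⟨hAH, hAmul, hAsum⟩ := hA
  obtain ⟨hXH, hXmul, hXsum⟩ := hX
  -- the key vanishing fact
  have hzero : ∀ i k, i ≠ k → (A i ⊗ₖ X k) * ρ = 0 := by
    intro i k hik
    refine aux_proj_mul_eq_zero _ _ (aux_kron_herm (hAH i) (hXH k)) ?_ hρ.1 (hcorr i k hik)
    rw [← Matrix.mul_kronecker_mul, hAmul i i, hXmul k k]
    simp
  have hzero' : ∀ i k, i ≠ k → ρ * (A i ⊗ₖ X k) = 0 := by
    intro i k hik
    have := congrArg Matrix.conjTranspose (hzero i k hik)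
    rwa [Matrix.conjTranspose_mul, hρ.1.isHermitian.eq,
      (aux_kron_herm (hAH i) (hXH k)).eq, Matrix.conjTranspose_zero] at this
  -- sum decompositions
  have hL : ((1 : Matrix (Fin s) (Fin s) ℂ) ⊗ₖ X j) * ρ = (A j ⊗ₖ X j) * ρ := by
    rw [← hAsum, aux_sum_kronecker, Finset.sum_mul]
    rw [Finset.sum_eq_single j (fun i _ hij => hzero i j hij) (by simp)]
  have hR : ρ * ((1 : Matrix (Fin s) (Fin s) ℂ) ⊗ₖ X j) = ρ * (A j ⊗ₖ X j) := by
    rw [← hAsum, aux_sum_kronecker, Finset.mul_sum]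
    rw [Finset.sum_eq_single j (fun i _ hij => hzero' i j hij) (by simp)]
  have hL1 : (A j ⊗ₖ (1 : Matrix (Fin f) (Fin f) ℂ)) * ρ = (A j ⊗ₖ X j) * ρ := by
    rw [← hXsum, aux_kronecker_sum, Finset.sum_mul]
    rw [Finset.sum_eq_single j (fun i _ hij => hzero j i (Ne.symm hij)) (by simp)]
  have hR1 : ρ * (A j ⊗ₖ (1 : Matrix (Fin f) (Fin f) ℂ)) = ρ * (A j ⊗ₖ X j) := by
    rw [← hXsum, aux_kronecker_sum, Finset.mul_sum]
    rw [Finset.sum_eq_single j (fun i _ hij => hzero' j i (Ne.symm hij)) (by simp)]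
  constructor
  · conv_lhs => rw [hL, Matrix.mul_assoc, hR, ← Matrix.mul_assoc]
  · conv_rhs => rw [hL1, Matrix.mul_assoc, hR1, ← Matrix.mul_assoc]
end
end

section
/- Let ρ be a density matrix on ℂ^s ⊗ ℂ^f, let (A_i)_{i∈I} be a projective measurement on ℂ^s and (X_j)_{j∈J} a projective measurement on ℂ^f, and suppose there exists a map f : J → I with Re Tr((A_i ⊗ X_j) ρ) = 0 whenever i ≠ f(j) (the fragment contains a perfect record of A). Let ρ^S be the partial trace of ρ over the second factor. Then ρ^S = ∑_i A_i ρ^S A_i and A_i ρ^S = ρ^S A_i for every i ∈ I; that is, ρ^S commutes with the observable A. -/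
open Matrix Kronecker BigOperators ComplexOrder

noncomputable section

/-- Partial trace over the second tensor factor. -/
def ptrace2 {a b : ℕ} (ρ : Matrix (Fin a × Fin b) (Fin a × Fin b) ℂ) :
    Matrix (Fin a) (Fin a) ℂ :=
  Matrix.of fun i i' => ∑ j, ρ (i, j) (i', j)

lemma myPtrace2Sum {a b : ℕ} {ι : Type*} [Fintype ι]
    (M : ι → Matrix (Fin a × Fin b) (Fin a × Fin b) ℂ) :
    ptrace2 (∑ k, M k) = ∑ k, ptrace2 (M k) := by
  ext i i'
  simp only [ptrace2, of_apply, Matrix.sum_apply]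
  rw [Finset.sum_comm]

lemma myPtrace2KronOneMul {a b : ℕ} (A : Matrix (Fin a) (Fin a) ℂ)
    (ρ : Matrix (Fin a × Fin b) (Fin a × Fin b) ℂ) :
    ptrace2 ((A ⊗ₖ (1 : Matrix (Fin b) (Fin b) ℂ)) * ρ) = A * ptrace2 ρ := by
  ext i i'
  simp only [ptrace2, of_apply, mul_apply, Fintype.sum_prod_type, kroneckerMap_apply,
    Matrix.one_apply, mul_ite, mul_one, mul_zero, ite_mul, zero_mul,
    Finset.sum_ite_eq, Finset.mem_univ, if_true]
  simp [Finset.mul_sum]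
  exact Finset.sum_comm

lemma myPtrace2MulKronOne {a b : ℕ} (A : Matrix (Fin a) (Fin a) ℂ)
    (ρ : Matrix (Fin a × Fin b) (Fin a × Fin b) ℂ) :
    ptrace2 (ρ * (A ⊗ₖ (1 : Matrix (Fin b) (Fin b) ℂ))) = ptrace2 ρ * A := by
  ext i i'
  simp only [ptrace2, of_apply, mul_apply, Fintype.sum_prod_type, kroneckerMap_apply,
    Matrix.one_apply, mul_ite, mul_one, mul_zero, ite_mul, zero_mul,
    Finset.sum_ite_eq', Finset.mem_univ, if_true]
  simp [Finset.sum_mul]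
  exact Finset.sum_comm

lemma myPtrace2OneKronComm {a b : ℕ} (X : Matrix (Fin b) (Fin b) ℂ)
    (ρ : Matrix (Fin a × Fin b) (Fin a × Fin b) ℂ) :
    ptrace2 (((1 : Matrix (Fin a) (Fin a) ℂ) ⊗ₖ X) * ρ) =
    ptrace2 (ρ * ((1 : Matrix (Fin a) (Fin a) ℂ) ⊗ₖ X)) := by
  ext i i'
  simp only [ptrace2, of_apply, mul_apply, Fintype.sum_prod_type, kroneckerMap_apply,
    Matrix.one_apply, mul_ite, mul_one, mul_zero, ite_mul, zero_mul,
    Finset.sum_ite_eq, Finset.sum_ite_eq', Finset.mem_univ, if_true]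
  conv_lhs => enter [2, x]; rw [Finset.sum_comm]
  conv_rhs => enter [2, x]; rw [Finset.sum_comm]
  simp only [Finset.sum_ite_eq, Finset.sum_ite_eq', Finset.mem_univ, if_true, one_mul, mul_one]
  rw [Finset.sum_comm]
  exact Finset.sum_congr rfl fun j _ => Finset.sum_congr rfl fun k _ => mul_comm _ _

open scoped MatrixOrder in
lemma myPsdEqConjTransposeMulSelf {n : Type*} [Fintype n] [DecidableEq n] {M : Matrix n n ℂ}
    (hM : M.PosSemidef) : ∃ B : Matrix n n ℂ, M = Bᴴ * B := by
  obtain ⟨B, hB⟩ := CStarAlgebra.nonneg_iff_eq_star_mul_self.mp hM.nonneg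
  exact ⟨B, hB⟩

lemma myTraceNonneg {n : Type*} [Fintype n] [DecidableEq n] {M : Matrix n n ℂ}
    (hM : M.PosSemidef) : 0 ≤ M.trace := by
  refine Finset.sum_nonneg fun i _ => ?_
  exact hM.diag_nonneg

lemma myPsdTraceZero {n : Type*} [Fintype n] [DecidableEq n] {M : Matrix n n ℂ}
    (hM : M.PosSemidef) (h : M.trace = 0) : M = 0 := by
  obtain ⟨B, rfl⟩ := myPsdEqConjTransposeMulSelf hM
  rw [conjTranspose_mul_self_eq_zero]
  have hdiag : ∀ i, (Bᴴ * B) i i = dotProduct (star fun k => B k i) (fun k => B k i) := by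
    intro i; simp [mul_apply, dotProduct, conjTranspose_apply]
  have hnn : ∀ i ∈ Finset.univ, (0:ℂ) ≤ (Bᴴ * B).diag i := by
    intro i _
    rw [Matrix.diag_apply, hdiag i]
    exact dotProduct_star_self_nonneg _
  have := (Finset.sum_eq_zero_iff_of_nonneg hnn).mp h
  ext k i
  have h0 : dotProduct (star fun k => B k i) (fun k => B k i) = 0 := by
    rw [← hdiag i]; exact this i (Finset.mem_univ i)
  have := dotProduct_star_self_eq_zero.mp h0
  exact congrFun this k

lemma myZeroLemma {n : Type*} [Fintype n] [DecidableEq n] {ρ P : Matrix n n ℂ}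
    (hρ : ρ.PosSemidef) (hP : P.IsHermitian) (hPP : P * P = P)
    (htr : ((P * ρ).trace).re = 0) : P * ρ = 0 ∧ ρ * P = 0 := by
  have hPsd : (P * ρ * P).PosSemidef := by
    have := hρ.mul_mul_conjTranspose_same P
    rwa [hP.eq] at this
  have htr2 : (P * ρ * P).trace = (P * ρ).trace := by
    rw [Matrix.trace_mul_comm, ← Matrix.mul_assoc, hPP]
  have hz : (P * ρ).trace = 0 := by
    have hle := myTraceNonneg hPsd
    rw [htr2] at hle
    rw [Complex.le_def] at hle
    apply Complex.ext
    · exact htr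
    · simpa using hle.2.symm
  have hPρP : P * ρ * P = 0 := myPsdTraceZero hPsd (htr2.trans hz)
  obtain ⟨B, rfl⟩ := myPsdEqConjTransposeMulSelf hρ
  have hBP : B * P = 0 := by
    have : (B * P)ᴴ * (B * P) = 0 := by
      rw [conjTranspose_mul, hP.eq, ← hPρP]
      noncomm_ring
    exact conjTranspose_mul_self_eq_zero.mp this
  have hρP : Bᴴ * B * P = 0 := by rw [Matrix.mul_assoc, hBP, Matrix.mul_zero]
  refine ⟨?_, hρP⟩
  have : (Bᴴ * B * P)ᴴ = 0 := by rw [hρP]; simp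
  rwa [conjTranspose_mul, hP.eq, (Matrix.isHermitian_conjTranspose_mul_self B).eq] at this

lemma mySumKroneckerLeft {ι l m : Type*} [Fintype ι] [Fintype l] [Fintype m]
    (A : ι → Matrix l l ℂ) (X : Matrix m m ℂ) :
    (∑ i, A i) ⊗ₖ X = ∑ i, (A i ⊗ₖ X) := by
  ext ⟨a, b⟩ ⟨c, d⟩
  simp [Matrix.sum_apply, Finset.sum_mul]

lemma mySumKroneckerRight {ι l m : Type*} [Fintype ι] [Fintype l] [Fintype m]
    (A : Matrix l l ℂ) (X : ι → Matrix m m ℂ) :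
    A ⊗ₖ (∑ j, X j) = ∑ j, (A ⊗ₖ X j) := by
  ext ⟨a, b⟩ ⟨c, d⟩
  simp [Matrix.sum_apply, Finset.mul_sum]

lemma myKronHermitian {l m : Type*} [Fintype l] [Fintype m]
    {A : Matrix l l ℂ} {X : Matrix m m ℂ} (hA : A.IsHermitian) (hX : X.IsHermitian) :
    (A ⊗ₖ X).IsHermitian := by
  ext ⟨a, b⟩ ⟨c, d⟩
  simp only [conjTranspose_apply, kroneckerMap_apply, star_mul']
  rw [mul_comm, ← conjTranspose_apply, ← conjTranspose_apply, hA.eq, hX.eq]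
  exact mul_comm _ _

/-- Lemma 2: a perfect environmental record of `A` implies decoherence of the system in
the eigenbasis of `A`: `ρ^S = ∑ᵢ Aᵢ ρ^S Aᵢ` and `ρ^S` commutes with every `Aᵢ`. -/
theorem stmt_2 {s fdim : ℕ} {I J : Type*}
    [Fintype I] [DecidableEq I] [Fintype J] [DecidableEq J]
    (ρ : Matrix (Fin s × Fin fdim) (Fin s × Fin fdim) ℂ) (hρ : IsDensityMatrix ρ)
    (A : I → Matrix (Fin s) (Fin s) ℂ) (hA : IsProjMeasurement A)
    (X : J → Matrix (Fin fdim) (Fin fdim) ℂ) (hX : IsProjMeasurement X)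
    (f : J → I)
    (hcorr : ∀ i j, i ≠ f j → (((A i ⊗ₖ X j) * ρ).trace).re = 0) :
    ptrace2 ρ = ∑ i, A i * ptrace2 ρ * A i ∧
    ∀ i, A i * ptrace2 ρ = ptrace2 ρ * A i := by
  obtain ⟨hAh, hAo, hA1⟩ := hA
  obtain ⟨hXh, hXo, hX1⟩ := hX
  -- Step 0: the correlation kills the cross terms
  have hzero : ∀ i j, i ≠ f j →
      (A i ⊗ₖ X j) * ρ = 0 ∧ ρ * (A i ⊗ₖ X j) = 0 := by
    intro i j hij
    refine myZeroLemma hρ.1 (myKronHermitian (hAh i) (hXh j)) ?_ (hcorr i j hij)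
    rw [← mul_kronecker_mul, hAo i i, hXo j j]
    simp
  -- Step 2: commutation
  have hcomm : ∀ i, A i * ptrace2 ρ = ptrace2 ρ * A i := by
    intro i
    have hL : A i * ptrace2 ρ =
        ∑ j, ptrace2 ((A i ⊗ₖ X j) * ρ) := by
      rw [← myPtrace2KronOneMul, ← hX1, mySumKroneckerRight, Finset.sum_mul, myPtrace2Sum]
    have hR : ptrace2 ρ * A i =
        ∑ j, ptrace2 (ρ * (A i ⊗ₖ X j)) := by
      rw [← myPtrace2MulKronOne, ← hX1, mySumKroneckerRight, Finset.mul_sum, myPtrace2Sum]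
    rw [hL, hR]
    refine Finset.sum_congr rfl fun j _ => ?_
    by_cases hij : i = f j
    · subst hij
      have h1 : (A (f j) ⊗ₖ X j) * ρ = ((1 : Matrix (Fin s) (Fin s) ℂ) ⊗ₖ X j) * ρ := by
        rw [← hA1, mySumKroneckerLeft, Finset.sum_mul]
        rw [Finset.sum_eq_single (f j)]
        · intro b _ hb
          exact (hzero b j hb).1
        · intro h; exact absurd (Finset.mem_univ (f j)) h
      have h2 : ρ * (A (f j) ⊗ₖ X j) = ρ * ((1 : Matrix (Fin s) (Fin s) ℂ) ⊗ₖ X j) := by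
        rw [← hA1, mySumKroneckerLeft, Finset.mul_sum]
        rw [Finset.sum_eq_single (f j)]
        · intro b _ hb
          exact (hzero b j hb).2
        · intro h; exact absurd (Finset.mem_univ (f j)) h
      rw [h1, h2, myPtrace2OneKronComm]
    · rw [(hzero i j hij).1, (hzero i j hij).2]
  refine ⟨?_, hcomm⟩
  -- Step 1 follows from commutation
  have : ∀ i, A i * ptrace2 ρ * A i = A i * ptrace2 ρ := by
    intro i
    rw [hcomm i, Matrix.mul_assoc, hAo i i, if_pos rfl]
  calc ptrace2 ρ = (∑ i, A i) * ptrace2 ρ := by rw [hA1, Matrix.one_mul]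
    _ = ∑ i, A i * ptrace2 ρ := Finset.sum_mul _ _ _
    _ = ∑ i, A i * ptrace2 ρ * A i := by
        exact Finset.sum_congr rfl fun i _ => (this i).symm
end
end

section
/- Let ρ be a density matrix on ℂ^s ⊗ ℂ^f ⊗ ℂ^g. Let (A_i)_{i∈I} and (B_j)_{j∈J} be projective measurements on ℂ^s, let (X_i)_{i∈I} be a projective measurement on ℂ^f with Re Tr((A_i ⊗ X_{i'} ⊗ 1) ρ) = 0 whenever i ≠ i', and let (Y_j)_{j∈J} be a projective measurement on ℂ^g with Re Tr((B_j ⊗ 1 ⊗ Y_{j'}) ρ) = 0 whenever j ≠ j'. Then for all i ∈ I and j ∈ J: (A_i B_j ⊗ 1 ⊗ 1) ρ (B_j A_i ⊗ 1 ⊗ 1) = (B_j A_i ⊗ 1 ⊗ 1) ρ (A_i B_j ⊗ 1 ⊗ 1); that is, A and B commute on the support of ρ. -/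
open Matrix Kronecker BigOperators ComplexOrder

noncomputable section

lemma kron_sum_right_s4 {m n p q ι : Type*} [Fintype ι] (A : Matrix m n ℂ) (B : ι → Matrix p q ℂ) :
    A ⊗ₖ (∑ i, B i) = ∑ i, A ⊗ₖ B i := by
  ext ⟨a, b⟩ ⟨c, d⟩
  simp [Matrix.kroneckerMap_apply, Finset.mul_sum, Matrix.sum_apply]

lemma kron_sum_left {m n p q ι : Type*} [Fintype ι] (A : ι → Matrix m n ℂ) (B : Matrix p q ℂ) :
    (∑ i, A i) ⊗ₖ B = ∑ i, A i ⊗ₖ B := by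
  ext ⟨a, b⟩ ⟨c, d⟩
  simp [Matrix.kroneckerMap_apply, Finset.sum_mul, Matrix.sum_apply]

lemma kron_conjT_s4 {l m n p : Type*} (A : Matrix l m ℂ) (B : Matrix n p ℂ) :
    (A ⊗ₖ B)ᴴ = Aᴴ ⊗ₖ Bᴴ := by
  ext ⟨a, b⟩ ⟨c, d⟩
  simp [Matrix.conjTranspose_apply, Matrix.kroneckerMap_apply, star_mul']

open scoped MatrixOrder in
/-- A Hermitian idempotent `P` with `Re Tr(Pρ) = 0` for PSD `ρ` kills `ρ`. -/
lemma proj_mul_psd_zero {n : Type*} [Fintype n] [DecidableEq n]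
    {P ρ : Matrix n n ℂ} (hP : P.IsHermitian) (hP2 : P * P = P)
    (hρ : ρ.PosSemidef) (h : ((P * ρ).trace).re = 0) : P * ρ = 0 := by
  set N := CFC.sqrt ρ * P with hN
  have hsq : (CFC.sqrt ρ).IsHermitian := (CFC.sqrt_nonneg ρ).posSemidef.isHermitian
  have hNN : Nᴴ * N = P * ρ * P := by
    rw [hN, conjTranspose_mul, hsq.eq, hP.eq, Matrix.mul_assoc,
      ← Matrix.mul_assoc (CFC.sqrt ρ) (CFC.sqrt ρ) P, CFC.sqrt_mul_sqrt_self ρ hρ.nonneg, Matrix.mul_assoc]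
  have htr : (Nᴴ * N).trace = (P * ρ).trace := by
    rw [hNN, Matrix.trace_mul_cycle, hP2]
  have htr2 : (Nᴴ * N).trace = ∑ j, ∑ i, star (N i j) * N i j := by
    simp [Matrix.trace, Matrix.diag, Matrix.mul_apply, Matrix.conjTranspose_apply]
  have hge : (0 : ℂ) ≤ (Nᴴ * N).trace := by
    rw [htr2]
    exact Finset.sum_nonneg fun j _ => Finset.sum_nonneg fun i _ => star_mul_self_nonneg _
  have h0 : (Nᴴ * N).trace = 0 := by
    apply Complex.ext
    · rw [htr]; exact h
    · exact ((Complex.le_def.mp hge).2).symm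
  have hN0 : N = 0 := by
    have hsum := (Finset.sum_eq_zero_iff_of_nonneg
      (fun j _ => Finset.sum_nonneg fun i _ => star_mul_self_nonneg (N i j))).mp
      (htr2 ▸ h0)
    ext i j
    have hcol : (fun i => N i j) = 0 := by
      apply dotProduct_star_self_eq_zero.mp
      simpa [dotProduct, Pi.star_apply] using hsum j (Finset.mem_univ j)
    simpa using congrFun hcol i
  have hρP : ρ * P = 0 := by
    have : CFC.sqrt ρ * N = ρ * P := by
      rw [hN, ← Matrix.mul_assoc, CFC.sqrt_mul_sqrt_self ρ hρ.nonneg]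
    rw [← this, hN0, Matrix.mul_zero]
  calc P * ρ = (ρ * P)ᴴ := by rw [conjTranspose_mul, hP.eq, hρ.isHermitian.eq]
    _ = 0 := by rw [hρP]; simp

/-- Multiplication of triple Kronecker products. -/
lemma kron3_mul {s f g : ℕ} (M1 M2 : Matrix (Fin s) (Fin s) ℂ)
    (F1 F2 : Matrix (Fin f) (Fin f) ℂ) (G1 G2 : Matrix (Fin g) (Fin g) ℂ) :
    ((M1 ⊗ₖ F1) ⊗ₖ G1) * ((M2 ⊗ₖ F2) ⊗ₖ G2) = ((M1 * M2) ⊗ₖ (F1 * F2)) ⊗ₖ (G1 * G2) := by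
  rw [← Matrix.mul_kronecker_mul, ← Matrix.mul_kronecker_mul]

lemma left_eq {n : Type*} [Fintype n] (ρ P Q P' Q' : Matrix n n ℂ)
    (hP : P * ρ = P' * ρ) (hQ : Q * ρ = Q' * ρ) (hc : P * Q' = Q' * P) :
    P * Q * ρ = Q' * P' * ρ := by
  calc P * Q * ρ = P * (Q * ρ) := by rw [Matrix.mul_assoc]
    _ = P * (Q' * ρ) := by rw [hQ]
    _ = (P * Q') * ρ := by rw [Matrix.mul_assoc]
    _ = (Q' * P) * ρ := by rw [hc]
    _ = Q' * (P * ρ) := by rw [Matrix.mul_assoc]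
    _ = Q' * (P' * ρ) := by rw [hP]
    _ = Q' * P' * ρ := by rw [Matrix.mul_assoc]

lemma right_eq {n : Type*} [Fintype n] (ρ P Q P' Q' : Matrix n n ℂ)
    (hP : ρ * P = ρ * P') (hQ : ρ * Q = ρ * Q') (hc : Q' * P = P * Q') :
    ρ * (Q * P) = ρ * (P' * Q') := by
  calc ρ * (Q * P) = (ρ * Q) * P := by rw [Matrix.mul_assoc]
    _ = (ρ * Q') * P := by rw [hQ]
    _ = ρ * (Q' * P) := by rw [Matrix.mul_assoc]
    _ = ρ * (P * Q') := by rw [hc]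
    _ = (ρ * P) * Q' := by rw [Matrix.mul_assoc]
    _ = (ρ * P') * Q' := by rw [hP]
    _ = ρ * (P' * Q') := by rw [Matrix.mul_assoc]

lemma final_alg {n : Type*} [Fintype n] (ρ P Q M : Matrix n n ℂ)
    (hL : P * Q * ρ = M * ρ) (hL' : Q * P * ρ = M * ρ)
    (hR : ρ * (Q * P) = ρ * M) (hR' : ρ * (P * Q) = ρ * M) :
    (P * Q) * ρ * (Q * P) = (Q * P) * ρ * (P * Q) := by
  calc (P * Q) * ρ * (Q * P) = (M * ρ) * (Q * P) := by rw [hL]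
    _ = M * (ρ * (Q * P)) := by rw [Matrix.mul_assoc]
    _ = M * (ρ * M) := by rw [hR]
    _ = M * (ρ * (P * Q)) := by rw [hR']
    _ = (M * ρ) * (P * Q) := by rw [Matrix.mul_assoc]
    _ = (Q * P) * ρ * (P * Q) := by rw [hL']

/-- Lemma 3: observables `A` and `B` recorded in disjoint fragments of the environment
necessarily commute on the support of the state. -/
theorem stmt_4 {s fdim gdim : ℕ} {I J : Type*}
    [Fintype I] [DecidableEq I] [Fintype J] [DecidableEq J]
    (ρ : Matrix ((Fin s × Fin fdim) × Fin gdim) ((Fin s × Fin fdim) × Fin gdim) ℂ)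
    (hρ : IsDensityMatrix ρ)
    (A : I → Matrix (Fin s) (Fin s) ℂ) (hA : IsProjMeasurement A)
    (B : J → Matrix (Fin s) (Fin s) ℂ) (hB : IsProjMeasurement B)
    (X : I → Matrix (Fin fdim) (Fin fdim) ℂ) (hX : IsProjMeasurement X)
    (Y : J → Matrix (Fin gdim) (Fin gdim) ℂ) (hY : IsProjMeasurement Y)
    (hAX : ∀ i i', i ≠ i' →
      ((((A i ⊗ₖ X i') ⊗ₖ (1 : Matrix (Fin gdim) (Fin gdim) ℂ)) * ρ).trace).re = 0)
    (hBY : ∀ j j', j ≠ j' →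
      ((((B j ⊗ₖ (1 : Matrix (Fin fdim) (Fin fdim) ℂ)) ⊗ₖ Y j') * ρ).trace).re = 0) :
    ∀ (i : I) (j : J),
      (((A i * B j) ⊗ₖ (1 : Matrix (Fin fdim) (Fin fdim) ℂ))
          ⊗ₖ (1 : Matrix (Fin gdim) (Fin gdim) ℂ)) * ρ *
        (((B j * A i) ⊗ₖ (1 : Matrix (Fin fdim) (Fin fdim) ℂ))
          ⊗ₖ (1 : Matrix (Fin gdim) (Fin gdim) ℂ))
      = (((B j * A i) ⊗ₖ (1 : Matrix (Fin fdim) (Fin fdim) ℂ))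
          ⊗ₖ (1 : Matrix (Fin gdim) (Fin gdim) ℂ)) * ρ *
        (((A i * B j) ⊗ₖ (1 : Matrix (Fin fdim) (Fin fdim) ℂ))
          ⊗ₖ (1 : Matrix (Fin gdim) (Fin gdim) ℂ)) := by
  obtain ⟨hρpsd, -⟩ := hρ
  obtain ⟨hAh, hAo, hAs⟩ := hA
  obtain ⟨hBh, hBo, hBs⟩ := hB
  obtain ⟨hXh, hXo, hXs⟩ := hX
  obtain ⟨hYh, hYo, hYs⟩ := hY
  -- the perfect-record hypotheses force the corresponding operators to kill ρ
  have hAX0 : ∀ i i', i ≠ i' →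
      ((A i ⊗ₖ X i') ⊗ₖ (1 : Matrix (Fin gdim) (Fin gdim) ℂ)) * ρ = 0 := by
    intro i i' hne
    refine proj_mul_psd_zero ?_ ?_ hρpsd (hAX i i' hne)
    · show _ = _
      rw [kron_conjT_s4, kron_conjT_s4, (hAh i).eq, (hXh i').eq, Matrix.conjTranspose_one]
    · rw [kron3_mul, hAo i i, hXo i' i', if_pos rfl, if_pos rfl, Matrix.one_mul]
  have hBY0 : ∀ j j', j ≠ j' →
      ((B j ⊗ₖ (1 : Matrix (Fin fdim) (Fin fdim) ℂ)) ⊗ₖ Y j') * ρ = 0 := by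
    intro j j' hne
    refine proj_mul_psd_zero ?_ ?_ hρpsd (hBY j j' hne)
    · show _ = _
      rw [kron_conjT_s4, kron_conjT_s4, (hBh j).eq, (hYh j').eq, Matrix.conjTranspose_one]
    · rw [kron3_mul, hBo j j, hYo j' j', if_pos rfl, if_pos rfl, Matrix.one_mul]
  -- keyA : A_i ⊗ 1 ⊗ 1 and 1 ⊗ X_i ⊗ 1 agree on ρ
  have keyA : ∀ i, ((A i ⊗ₖ (1 : Matrix (Fin fdim) (Fin fdim) ℂ))
        ⊗ₖ (1 : Matrix (Fin gdim) (Fin gdim) ℂ)) * ρ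
      = (((1 : Matrix (Fin s) (Fin s) ℂ) ⊗ₖ X i)
        ⊗ₖ (1 : Matrix (Fin gdim) (Fin gdim) ℂ)) * ρ := by
    intro i
    have e1 : (A i ⊗ₖ (1 : Matrix (Fin fdim) (Fin fdim) ℂ))
        ⊗ₖ (1 : Matrix (Fin gdim) (Fin gdim) ℂ)
        = ∑ i', (A i ⊗ₖ X i') ⊗ₖ (1 : Matrix (Fin gdim) (Fin gdim) ℂ) := by
      rw [← hXs, kron_sum_right_s4, kron_sum_left]
    have e2 : ((1 : Matrix (Fin s) (Fin s) ℂ) ⊗ₖ X i)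
        ⊗ₖ (1 : Matrix (Fin gdim) (Fin gdim) ℂ)
        = ∑ i'', (A i'' ⊗ₖ X i) ⊗ₖ (1 : Matrix (Fin gdim) (Fin gdim) ℂ) := by
      rw [← hAs, kron_sum_left, kron_sum_left]
    rw [e1, e2, Finset.sum_mul, Finset.sum_mul,
      Fintype.sum_eq_single i (fun i' hi' => hAX0 i i' (Ne.symm hi')),
      Fintype.sum_eq_single i (fun i'' hi'' => hAX0 i'' i hi'')]
  have keyB : ∀ j, ((B j ⊗ₖ (1 : Matrix (Fin fdim) (Fin fdim) ℂ))
        ⊗ₖ (1 : Matrix (Fin gdim) (Fin gdim) ℂ)) * ρ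
      = (((1 : Matrix (Fin s) (Fin s) ℂ) ⊗ₖ (1 : Matrix (Fin fdim) (Fin fdim) ℂ))
        ⊗ₖ Y j) * ρ := by
    intro j
    have e1 : (B j ⊗ₖ (1 : Matrix (Fin fdim) (Fin fdim) ℂ))
        ⊗ₖ (1 : Matrix (Fin gdim) (Fin gdim) ℂ)
        = ∑ j', (B j ⊗ₖ (1 : Matrix (Fin fdim) (Fin fdim) ℂ)) ⊗ₖ Y j' := by
      rw [← hYs, kron_sum_right_s4]
    have e2 : ((1 : Matrix (Fin s) (Fin s) ℂ) ⊗ₖ (1 : Matrix (Fin fdim) (Fin fdim) ℂ))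
        ⊗ₖ Y j
        = ∑ j'', (B j'' ⊗ₖ (1 : Matrix (Fin fdim) (Fin fdim) ℂ)) ⊗ₖ Y j := by
      rw [← hBs, kron_sum_left, kron_sum_left]
    rw [e1, e2, Finset.sum_mul, Finset.sum_mul,
      Fintype.sum_eq_single j (fun j' hj' => hBY0 j j' (Ne.symm hj')),
      Fintype.sum_eq_single j (fun j'' hj'' => hBY0 j'' j hj'')]
  -- adjoint versions
  have keyA' : ∀ i, ρ * ((A i ⊗ₖ (1 : Matrix (Fin fdim) (Fin fdim) ℂ))
        ⊗ₖ (1 : Matrix (Fin gdim) (Fin gdim) ℂ))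
      = ρ * (((1 : Matrix (Fin s) (Fin s) ℂ) ⊗ₖ X i)
        ⊗ₖ (1 : Matrix (Fin gdim) (Fin gdim) ℂ)) := by
    intro i
    have h := congrArg Matrix.conjTranspose (keyA i)
    simpa [Matrix.conjTranspose_mul, kron_conjT_s4, (hAh i).eq, (hXh i).eq,
      hρpsd.isHermitian.eq] using h
  have keyB' : ∀ j, ρ * ((B j ⊗ₖ (1 : Matrix (Fin fdim) (Fin fdim) ℂ))
        ⊗ₖ (1 : Matrix (Fin gdim) (Fin gdim) ℂ))
      = ρ * (((1 : Matrix (Fin s) (Fin s) ℂ) ⊗ₖ (1 : Matrix (Fin fdim) (Fin fdim) ℂ))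
        ⊗ₖ Y j) := by
    intro j
    have h := congrArg Matrix.conjTranspose (keyB j)
    simpa [Matrix.conjTranspose_mul, kron_conjT_s4, (hBh j).eq, (hYh j).eq,
      hρpsd.isHermitian.eq] using h
  intro i j
  -- abbreviations
  have hab : (((A i * B j) ⊗ₖ (1 : Matrix (Fin fdim) (Fin fdim) ℂ))
        ⊗ₖ (1 : Matrix (Fin gdim) (Fin gdim) ℂ))
      = ((A i ⊗ₖ 1) ⊗ₖ 1) * ((B j ⊗ₖ 1) ⊗ₖ 1) := by
    rw [kron3_mul, Matrix.one_mul, Matrix.one_mul]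
  have hba : (((B j * A i) ⊗ₖ (1 : Matrix (Fin fdim) (Fin fdim) ℂ))
        ⊗ₖ (1 : Matrix (Fin gdim) (Fin gdim) ℂ))
      = ((B j ⊗ₖ 1) ⊗ₖ 1) * ((A i ⊗ₖ 1) ⊗ₖ 1) := by
    rw [kron3_mul, Matrix.one_mul, Matrix.one_mul]
  -- commutation facts
  have cAY : ((A i ⊗ₖ (1 : Matrix (Fin fdim) (Fin fdim) ℂ))
        ⊗ₖ (1 : Matrix (Fin gdim) (Fin gdim) ℂ))
      * (((1 : Matrix (Fin s) (Fin s) ℂ) ⊗ₖ (1 : Matrix (Fin fdim) (Fin fdim) ℂ)) ⊗ₖ Y j)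
      = (((1 : Matrix (Fin s) (Fin s) ℂ) ⊗ₖ (1 : Matrix (Fin fdim) (Fin fdim) ℂ)) ⊗ₖ Y j)
      * ((A i ⊗ₖ (1 : Matrix (Fin fdim) (Fin fdim) ℂ))
        ⊗ₖ (1 : Matrix (Fin gdim) (Fin gdim) ℂ)) := by
    rw [kron3_mul, kron3_mul]
    simp
  have cBX : ((B j ⊗ₖ (1 : Matrix (Fin fdim) (Fin fdim) ℂ))
        ⊗ₖ (1 : Matrix (Fin gdim) (Fin gdim) ℂ))
      * (((1 : Matrix (Fin s) (Fin s) ℂ) ⊗ₖ X i) ⊗ₖ (1 : Matrix (Fin gdim) (Fin gdim) ℂ))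
      = (((1 : Matrix (Fin s) (Fin s) ℂ) ⊗ₖ X i) ⊗ₖ (1 : Matrix (Fin gdim) (Fin gdim) ℂ))
      * ((B j ⊗ₖ (1 : Matrix (Fin fdim) (Fin fdim) ℂ))
        ⊗ₖ (1 : Matrix (Fin gdim) (Fin gdim) ℂ)) := by
    rw [kron3_mul, kron3_mul]
    simp
  have cXY : (((1 : Matrix (Fin s) (Fin s) ℂ) ⊗ₖ (1 : Matrix (Fin fdim) (Fin fdim) ℂ)) ⊗ₖ Y j)
      * (((1 : Matrix (Fin s) (Fin s) ℂ) ⊗ₖ X i) ⊗ₖ (1 : Matrix (Fin gdim) (Fin gdim) ℂ))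
      = (((1 : Matrix (Fin s) (Fin s) ℂ) ⊗ₖ X i) ⊗ₖ (1 : Matrix (Fin gdim) (Fin gdim) ℂ))
      * (((1 : Matrix (Fin s) (Fin s) ℂ) ⊗ₖ (1 : Matrix (Fin fdim) (Fin fdim) ℂ)) ⊗ₖ Y j) := by
    rw [kron3_mul, kron3_mul]
    simp
  rw [hab, hba]
  have hL := left_eq ρ _ _ _ _ (keyA i) (keyB j) cAY
  have hL' := left_eq ρ _ _ _ _ (keyB j) (keyA i) (cBX.symm ▸ cBX)
  have hR := right_eq ρ _ _ _ _ (keyA' i) (keyB' j) cAY.symm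
  have hR' := right_eq ρ _ _ _ _ (keyB' j) (keyA' i) cBX.symm
  -- hL : A*B*ρ = Y*X*ρ ; hL' : B*A*ρ = X*Y*ρ ; hR : ρ*(B*A) = ρ*(X*Y) ; hR' : ρ*(A*B) = ρ*(Y*X)
  refine final_alg ρ _ _ ((((1 : Matrix (Fin s) (Fin s) ℂ) ⊗ₖ X i)
      ⊗ₖ (1 : Matrix (Fin gdim) (Fin gdim) ℂ))
    * (((1 : Matrix (Fin s) (Fin s) ℂ) ⊗ₖ (1 : Matrix (Fin fdim) (Fin fdim) ℂ)) ⊗ₖ Y j))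
    ?_ ?_ ?_ ?_
  · rw [hL, cXY]
  · exact hL'
  · exact hR
  · rw [hR', cXY]
end
end

section
/- Let N, R, R' be positive natural numbers with R · R' > N. Let F_1, …, F_R and G_1, …, G_{R'} be two families of nonempty subsets of a finite set of cardinality N, such that the F_i are pairwise disjoint and the G_j are pairwise disjoint. Then there exist indices i ≤ R and j ≤ R' with F_i ∩ G_j = ∅. -/
open BigOperators

/-- The pigeonhole core of Theorem 2: if `R · R' > N` and `F₁,…,F_R` and `G₁,…,G_{R'}`
are two families of nonempty, pairwise disjoint subsets of a set of cardinality `N`,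
then some `Fᵢ` is disjoint from some `Gⱼ`. -/
theorem stmt_7 {N R R' : ℕ} (hN : 0 < N) (hR : 0 < R) (hR' : 0 < R')
    (hRR' : N < R * R')
    (F : Fin R → Finset (Fin N)) (G : Fin R' → Finset (Fin N))
    (hFne : ∀ i, (F i).Nonempty) (hGne : ∀ j, (G j).Nonempty)
    (hFdisj : ∀ i i', i ≠ i' → Disjoint (F i) (F i'))
    (hGdisj : ∀ j j', j ≠ j' → Disjoint (G j) (G j')) :
    ∃ (i : Fin R) (j : Fin R'), F i ∩ G j = ∅ := by
  by_contra h
  push_neg at h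
  have hmeet : ∀ p : Fin R × Fin R', ((F p.1) ∩ (G p.2)).Nonempty := by
    intro p
    exact h p.1 p.2
  choose f hf using hmeet
  have hinj : Function.Injective f := by
    intro p q hpq
    have hp := hf p
    have hq := hf q
    simp only [Finset.mem_inter] at hp hq
    have h1 : p.1 = q.1 := by
      by_contra hne
      exact Finset.disjoint_left.mp (hFdisj p.1 q.1 hne) hp.1 (hpq ▸ hq.1)
    have h2 : p.2 = q.2 := by
      by_contra hne
      exact Finset.disjoint_left.mp (hGdisj p.2 q.2 hne) hp.2 (hpq ▸ hq.2)
    exact Prod.ext h1 h2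
  have hcard := Fintype.card_le_of_injective f hinj
  simp [Fintype.card_prod] at hcard
  omega
end

section
/- Let α : {1,…,d} → ℂ, let Φ_1,…,Φ_d be unit vectors in ℂ^m, let Ψ_1,…,Ψ_d be orthonormal vectors in ℂ^m, and let γ : {1,…,d}×{1,…,d} → ℂ satisfy γ_{ii} = 1 and γ_{ji} = conj(γ_{ij}). Define the matrices on ℂ^d ⊗ ℂ^m (indexed by pairs): ρ((i,k),(j,l)) = α_i · conj(α_j) · γ_{ij} · Φ_i(k) · conj(Φ_j(l)) and σ((i,k),(j,l)) = δ_{ij} · |α_i|² · Ψ_i(k) · conj(Ψ_i(l)). Then Re Tr((ρ − σ)²) = 2 ∑_{i=1}^d |α_i|⁴ (1 − |⟨Φ_i, Ψ_i⟩|²) + ∑_{i≠j} |α_i|² |α_j|² |γ_{ij}|². -/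
/-!
Both states are block matrices `∑ᵢⱼ cᵢⱼ |i⟩⟨j| ⊗ |xᵢ⟩⟨yⱼ|`, and the trace of a product of two
such matrices is `∑ᵢⱼ cᵢⱼ c'ⱼᵢ ⟨y'ᵢ, xᵢ⟩ ⟨yⱼ, x'ⱼ⟩`. Expanding `Tr (ρ − σ)²` into
`Tr ρ² − 2 Tr ρσ + Tr σ²`, normalization of `Φ` and `Ψ` gives
`Tr ρ² = ∑ᵢⱼ |αᵢ|²|αⱼ|²|γᵢⱼ|²` (by hermiticity of `γ`), `Tr ρσ = ∑ᵢ |αᵢ|⁴ |⟨Φᵢ, Ψᵢ⟩|²`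
(as `γᵢᵢ = 1`) and `Tr σ² = ∑ᵢ |αᵢ|⁴`; the diagonal `i = j` of `Tr ρ²` contributes
another `∑ᵢ |αᵢ|⁴`.
-/

open Matrix BigOperators

noncomputable section

/-- Standard Hermitian inner product on `Fin m → ℂ` (conjugate-linear in the first slot). -/
def cinner {m : ℕ} (u v : Fin m → ℂ) : ℂ :=
  ∑ k, (starRingEnd ℂ) (u k) * v k

open ComplexConjugate

lemma cinner_comm {m : ℕ} (u v : Fin m → ℂ) : cinner v u = conj (cinner u v) := by
  simp only [cinner, map_sum, map_mul, Complex.conj_conj, mul_comm]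

lemma Finset.sum_sum_eq_sum_diag_add_sum_ne {ι M : Type*} [Fintype ι] [DecidableEq ι]
    [AddCommMonoid M] (f : ι → ι → M) :
    ∑ i, ∑ j, f i j = ∑ i, f i i + ∑ i, ∑ j, if i ≠ j then f i j else 0 := by
  rw [← Finset.sum_add_distrib]
  refine Finset.sum_congr rfl fun i _ => ?_
  rw [← Finset.sum_filter, Finset.filter_ne, Finset.add_sum_erase _ _ (Finset.mem_univ i)]

/-- The matrix `∑ᵢⱼ cᵢⱼ |i⟩⟨j| ⊗ |xᵢ⟩⟨yⱼ|` on `ℂ^ι ⊗ ℂ^m`. -/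
def blockOuter {ι : Type*} {m : ℕ} (c : ι → ι → ℂ) (x y : ι → Fin m → ℂ) :
    Matrix (ι × Fin m) (ι × Fin m) ℂ :=
  Matrix.of fun p q => c p.1 q.1 * x p.1 p.2 * conj (y q.1 q.2)

lemma trace_blockOuter_mul_blockOuter {ι : Type*} [Fintype ι] {m : ℕ}
    (c c' : ι → ι → ℂ) (x y x' y' : ι → Fin m → ℂ) :
    (blockOuter c x y * blockOuter c' x' y').trace =
      ∑ i, ∑ j, c i j * c' j i * cinner (y' i) (x i) * cinner (y j) (x' j) := by
  simp only [Matrix.trace, Matrix.diag, Matrix.mul_apply, blockOuter, Matrix.of_apply,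
    Fintype.sum_prod_type, cinner, Finset.mul_sum, Finset.sum_mul]
  refine Finset.sum_congr rfl fun i _ => ?_
  rw [Finset.sum_comm]
  refine Finset.sum_congr rfl fun j _ => ?_
  rw [Finset.sum_comm]
  refine Finset.sum_congr rfl fun k _ => Finset.sum_congr rfl fun l _ => ?_
  ring

section States

variable {ι : Type*} [Fintype ι] {m : ℕ}

def decoheredState (α : ι → ℂ) (Φ : ι → Fin m → ℂ) (γ : ι → ι → ℂ) :
    Matrix (ι × Fin m) (ι × Fin m) ℂ :=
  blockOuter (fun i j => α i * conj (α j) * γ i j) Φ Φ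

def correlatedState [DecidableEq ι] (α : ι → ℂ) (Ψ : ι → Fin m → ℂ) :
    Matrix (ι × Fin m) (ι × Fin m) ℂ :=
  blockOuter (fun i j => if i = j then (‖α i‖ : ℂ) ^ 2 else 0) Ψ Ψ

lemma trace_decoheredState_mul_self (α : ι → ℂ) {Φ : ι → Fin m → ℂ} {γ : ι → ι → ℂ}
    (hΦ : ∀ i, cinner (Φ i) (Φ i) = 1) (hγ : ∀ i j, γ j i = conj (γ i j)) :
    (decoheredState α Φ γ * decoheredState α Φ γ).trace =
      ((∑ i, ∑ j, ‖α i‖ ^ 2 * ‖α j‖ ^ 2 * ‖γ i j‖ ^ 2 : ℝ) : ℂ) := by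
  rw [decoheredState, trace_blockOuter_mul_blockOuter]
  push_cast
  refine Finset.sum_congr rfl fun i _ => Finset.sum_congr rfl fun j _ => ?_
  rw [hΦ, hΦ, hγ i j, ← Complex.mul_conj', ← Complex.mul_conj', ← Complex.mul_conj']
  ring

lemma trace_decoheredState_mul_correlatedState [DecidableEq ι] (α : ι → ℂ) (Φ Ψ : ι → Fin m → ℂ)
    {γ : ι → ι → ℂ} (hγ : ∀ i, γ i i = 1) :
    (decoheredState α Φ γ * correlatedState α Ψ).trace =
      ((∑ i, ‖α i‖ ^ 4 * ‖cinner (Φ i) (Ψ i)‖ ^ 2 : ℝ) : ℂ) := by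
  push_cast
  simp only [decoheredState, correlatedState, trace_blockOuter_mul_blockOuter, mul_ite, ite_mul,
    mul_zero, zero_mul, Finset.sum_ite_eq', Finset.mem_univ, if_true]
  refine Finset.sum_congr rfl fun i _ => ?_
  rw [hγ, cinner_comm (Φ i), Complex.mul_conj', mul_assoc _ (conj _), Complex.conj_mul']
  ring

lemma trace_correlatedState_mul_self [DecidableEq ι] (α : ι → ℂ) {Ψ : ι → Fin m → ℂ}
    (hΨ : ∀ i, cinner (Ψ i) (Ψ i) = 1) :
    (correlatedState α Ψ * correlatedState α Ψ).trace = ((∑ i, ‖α i‖ ^ 4 : ℝ) : ℂ) := by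
  push_cast
  simp only [correlatedState, trace_blockOuter_mul_blockOuter, mul_ite, ite_mul,
    mul_zero, zero_mul, Finset.sum_ite_eq', Finset.mem_univ, if_true, hΨ]
  refine Finset.sum_congr rfl fun i _ => ?_
  ring

end States

/-- The exact Frobenius-distance identity (proof of the appendix Lemma):
`Tr (ρ − σ)² = 2 ∑ᵢ |αᵢ|⁴ (1 − |⟨Φᵢ,Ψᵢ⟩|²) + ∑_{i≠j} |αᵢ|² |αⱼ|² |γᵢⱼ|²`. -/
theorem stmt_13 {d m : ℕ} (α : Fin d → ℂ) (Φ Ψ : Fin d → Fin m → ℂ)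
    (hΦ : ∀ i, cinner (Φ i) (Φ i) = 1)
    (hΨ : ∀ i j, cinner (Ψ i) (Ψ j) = if i = j then 1 else 0)
    (γ : Fin d → Fin d → ℂ)
    (hγdiag : ∀ i, γ i i = 1)
    (hγherm : ∀ i j, γ j i = (starRingEnd ℂ) (γ i j))
    (ρ σ : Matrix (Fin d × Fin m) (Fin d × Fin m) ℂ)
    (hρ : ρ = Matrix.of fun p q =>
      α p.1 * (starRingEnd ℂ) (α q.1) * γ p.1 q.1 * Φ p.1 p.2 * (starRingEnd ℂ) (Φ q.1 q.2))
    (hσ : σ = Matrix.of fun p q =>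
      if p.1 = q.1 then ((‖α p.1‖ : ℂ))^2 * Ψ p.1 p.2 * (starRingEnd ℂ) (Ψ p.1 q.2)
      else 0) :
    ((((ρ - σ) * (ρ - σ)).trace)).re =
      2 * ∑ i, (‖α i‖)^4 * (1 - (‖cinner (Φ i) (Ψ i)‖)^2)
      + ∑ i, ∑ j, if i ≠ j then
          (‖α i‖)^2 * (‖α j‖)^2 * (‖γ i j‖)^2
        else 0 := by
  have hρ' : ρ = decoheredState α Φ γ := hρ
  have hσ' : σ = correlatedState α Ψ := by
    ext p q
    simp only [hσ, correlatedState, blockOuter, Matrix.of_apply, ite_mul, zero_mul]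
    split_ifs with h
    · rw [h]
    · rfl
  have hΨ' : ∀ i, cinner (Ψ i) (Ψ i) = 1 := fun i => by simpa using hΨ i i
  have htrace : ((ρ - σ) * (ρ - σ)).trace =
      (ρ * ρ).trace - 2 * (ρ * σ).trace + (σ * σ).trace := by
    rw [sub_mul, mul_sub, mul_sub, Matrix.trace_sub, Matrix.trace_sub, Matrix.trace_sub,
      Matrix.trace_mul_comm σ ρ]
    ring
  rw [htrace, hρ', hσ', trace_decoheredState_mul_self α hΦ hγherm,
    trace_decoheredState_mul_correlatedState α Φ Ψ hγdiag, trace_correlatedState_mul_self α hΨ']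
  norm_cast
  rw [Finset.sum_sum_eq_sum_diag_add_sum_ne fun i j => ‖α i‖ ^ 2 * ‖α j‖ ^ 2 * ‖γ i j‖ ^ 2]
  simp only [hγdiag, norm_one, one_pow, mul_one, ← pow_add, mul_sub, Finset.sum_sub_distrib]
  ring
end
end

section
/- Let p be a probability vector on {1,…,d}, let Ψ_1,…,Ψ_d be orthonormal vectors in ℂ^m, and let σ = ∑_{i=1}^d p_i · E_ii ⊗ |Ψ_i⟩⟨Ψ_i| be the corresponding density matrix on ℂ^d ⊗ ℂ^m. Let (B_l)_{l∈L} be any projective measurement on ℂ^d and (Y_n)_{n∈N} any projective measurement on ℂ^m. Define the joint outcome distributions p_{BX}(l,i) = Re Tr((B_l ⊗ |Ψ_i⟩⟨Ψ_i|) σ) for i ∈ {1,…,d} and p_{BY}(l,n) = Re Tr((B_l ⊗ Y_n) σ). Then both are probability mass functions and I(B:X) ≥ I(B:Y): the pointer measurement X on the fragment is the optimal measurement for learning about any system observable B. -/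
open Matrix Kronecker BigOperators

noncomputable section

/-- The matrix unit `E_ii`. -/
def matE {d : ℕ} (i : Fin d) : Matrix (Fin d) (Fin d) ℂ :=
  Matrix.single i i 1

/-- The rank-one projector `|v⟩⟨v|`. -/
def projVec {m : ℕ} (v : Fin m → ℂ) : Matrix (Fin m) (Fin m) ℂ :=
  Matrix.of fun k l => v k * (starRingEnd ℂ) (v l)

/-- The perfectly correlated system–fragment state `σ = ∑ᵢ pᵢ E_ii ⊗ |Ψᵢ⟩⟨Ψᵢ|`. -/
def sigmaSF {d m : ℕ} (p : Fin d → ℝ) (Ψ : Fin d → Fin m → ℂ) :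
    Matrix (Fin d × Fin m) (Fin d × Fin m) ℂ :=
  ∑ i, (p i : ℂ) • (matE i ⊗ₖ projVec (Ψ i))

/-- Mutual information of a joint pmf `p` on `I × J`. -/
def mutualInfo {I J : Type*} [Fintype I] [Fintype J] (p : I → J → ℝ) : ℝ :=
  ∑ i, ∑ j, if p i j = 0 then 0
    else p i j * Real.log (p i j / ((∑ j', p i j') * (∑ i', p i' j)))

/-! The state `σ` is classical in the pointer basis, so `p_{BX}(l,i) = pᵢ (B_l)ᵢᵢ` and
`p_{BY}(l,n) = ∑ᵢ p_{BX}(l,i) ⟨Ψᵢ|Yₙ|Ψᵢ⟩`. Since `Yₙ` is a projective measurement, `i ↦ (⟨Ψᵢ|Yₙ|Ψᵢ⟩)ₙ`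
is a stochastic matrix: `B — X — Y` is a Markov chain, and the claim is the data-processing
inequality, which follows termwise from the log-sum inequality. -/

theorem mutualInfo_eq {I J : Type*} [Fintype I] [Fintype J] (P : I → J → ℝ) :
    mutualInfo P =
      ∑ i, ∑ j, P i j * Real.log (P i j / ((∑ j', P i j') * ∑ i', P i' j)) := by
  unfold mutualInfo
  congr! 2 with i - j -
  split_ifs with h <;> simp [h]

theorem Real.mul_log_add_sub_le_mul_log_div {a b c : ℝ} (ha : 0 ≤ a) (hb : 0 ≤ b)
    (hab : b = 0 → a = 0) (hc : 0 < c) :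
    a * Real.log c + a - b * c ≤ a * Real.log (a / b) := by
  rcases ha.eq_or_lt with rfl | ha
  · simpa using mul_nonneg hb hc.le
  have hb : 0 < b := hb.lt_of_ne (fun h => ha.ne' (hab h.symm))
  -- `1 - 1/y ≤ log y` at `y = a / (b c)`
  have key := Real.one_sub_inv_le_log_of_pos (show 0 < a / (b * c) by positivity)
  rw [Real.log_div ha.ne' (by positivity), Real.log_mul hb.ne' hc.ne', inv_div] at key
  rw [Real.log_div ha.ne' hb.ne']
  have := mul_le_mul_of_nonneg_left key ha.le
  rw [mul_sub, mul_one, mul_div_cancel₀ _ ha.ne'] at this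
  linarith

theorem Real.sum_mul_log_div_sum_le {ι : Type*} [Fintype ι] {a b : ι → ℝ}
    (ha : ∀ i, 0 ≤ a i) (hb : ∀ i, 0 ≤ b i) (hab : ∀ i, b i = 0 → a i = 0) :
    (∑ i, a i) * Real.log ((∑ i, a i) / ∑ i, b i) ≤ ∑ i, a i * Real.log (a i / b i) := by
  rcases (Finset.sum_nonneg fun i _ => ha i).eq_or_lt with hA | hA
  · have h0 : ∀ i, a i = 0 := fun i =>
      (Finset.sum_eq_zero_iff_of_nonneg fun i _ => ha i).1 hA.symm i (Finset.mem_univ i)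
    simp [h0]
  have hB : 0 < ∑ i, b i := by
    refine (Finset.sum_nonneg fun i _ => hb i).lt_of_ne fun hB => hA.ne' ?_
    exact Finset.sum_eq_zero fun i _ => hab i
      ((Finset.sum_eq_zero_iff_of_nonneg fun i _ => hb i).1 hB.symm i (Finset.mem_univ i))
  calc (∑ i, a i) * Real.log ((∑ i, a i) / ∑ i, b i)
      = ∑ i, (a i * Real.log ((∑ i, a i) / ∑ i, b i) + a i
          - b i * ((∑ i, a i) / ∑ i, b i)) := by
        rw [Finset.sum_sub_distrib, Finset.sum_add_distrib, ← Finset.sum_mul, ← Finset.sum_mul,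
          mul_div_cancel₀ _ hB.ne']
        ring
    _ ≤ ∑ i, a i * Real.log (a i / b i) := Finset.sum_le_sum fun i _ =>
        Real.mul_log_add_sub_le_mul_log_div (ha i) (hb i) (hab i) (by positivity)

theorem sum_sum_mul_stochastic {I J K : Type*} [Fintype I] [Fintype J] [Fintype K]
    (P : I → J → ℝ) (q : J → K → ℝ) (hq : ∀ j, ∑ k, q j k = 1) (i : I) :
    ∑ k, ∑ j, P i j * q j k = ∑ j, P i j := by
  rw [Finset.sum_comm]
  simp only [← Finset.mul_sum, hq, mul_one]

theorem mutualInfo_comp_stochastic_le {I J K : Type*} [Fintype I] [Fintype J] [Fintype K]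
    (P : I → J → ℝ) (q : J → K → ℝ) (hP : ∀ i j, 0 ≤ P i j) (hq0 : ∀ j k, 0 ≤ q j k)
    (hq1 : ∀ j, ∑ k, q j k = 1) :
    mutualInfo (fun i k => ∑ j, P i j * q j k) ≤ mutualInfo P := by
  rw [mutualInfo_eq, mutualInfo_eq]
  set r := fun i => ∑ j, P i j
  set c := fun j => ∑ i, P i j
  have hr : ∀ i, 0 ≤ r i := fun i => Finset.sum_nonneg fun j _ => hP i j
  have hc : ∀ j, 0 ≤ c j := fun j => Finset.sum_nonneg fun i _ => hP i j
  have hPr : ∀ i j, r i = 0 → P i j = 0 := fun i j h =>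
    (Finset.sum_eq_zero_iff_of_nonneg fun j _ => hP i j).1 h j (Finset.mem_univ j)
  have hPc : ∀ i j, c j = 0 → P i j = 0 := fun i j h =>
    (Finset.sum_eq_zero_iff_of_nonneg fun i _ => hP i j).1 h i (Finset.mem_univ i)
  have hcol : ∀ k, ∑ i, ∑ j, P i j * q j k = ∑ j, c j * q j k := fun k => by
    rw [Finset.sum_comm]; simp only [c, Finset.sum_mul]
  have hlogsum : ∀ i k,
      (∑ j, P i j * q j k) * Real.log ((∑ j, P i j * q j k) / (r i * ∑ j, c j * q j k)) ≤
        ∑ j, q j k * (P i j * Real.log (P i j / (r i * c j))) := fun i k => by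
    rw [Finset.mul_sum]
    convert Real.sum_mul_log_div_sum_le (a := fun j => P i j * q j k)
      (b := fun j => r i * (c j * q j k)) (fun j => mul_nonneg (hP i j) (hq0 j k))
      (fun j => mul_nonneg (hr i) (mul_nonneg (hc j) (hq0 j k))) ?_ using 2 with j
    · rcases eq_or_ne (q j k) 0 with h | h
      · simp [h]
      · rw [← mul_assoc (r i), mul_div_mul_right _ _ h]; ring
    · intro j h
      rcases mul_eq_zero.1 h with h | h
      · simp [hPr i j h]
      rcases mul_eq_zero.1 h with h | h
      · simp [hPc i j h]
      · simp [h]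
  simp only [sum_sum_mul_stochastic P q hq1, hcol]
  calc _ ≤ ∑ i, ∑ k, ∑ j, q j k * (P i j * Real.log (P i j / (r i * c j))) :=
        Finset.sum_le_sum fun i _ => Finset.sum_le_sum fun k _ => hlogsum i k
    _ = _ := by
        refine Finset.sum_congr rfl fun i _ => ?_
        rw [Finset.sum_comm]
        simp only [← Finset.sum_mul, hq1, one_mul]
        rfl

open scoped ComplexOrder

theorem cinner_eq_star_dotProduct {m : ℕ} (u v : Fin m → ℂ) : cinner u v = star u ⬝ᵥ v := rfl

theorem projVec_mulVec {m : ℕ} (u v : Fin m → ℂ) : projVec u *ᵥ v = cinner u v • u := by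
  ext k
  simp only [projVec, mulVec, dotProduct, of_apply, Pi.smul_apply, smul_eq_mul, cinner,
    Finset.sum_mul]
  exact Finset.sum_congr rfl fun _ _ => by ring

theorem trace_mul_projVec {m : ℕ} (C : Matrix (Fin m) (Fin m) ℂ) (v : Fin m → ℂ) :
    (C * projVec v).trace = star v ⬝ᵥ (C *ᵥ v) := by
  simp only [trace, diag, mul_apply, projVec, of_apply, dotProduct, mulVec, Pi.star_apply,
    Complex.star_def, Finset.mul_sum]
  exact Finset.sum_congr rfl fun _ _ => Finset.sum_congr rfl fun _ _ => by ring

theorem trace_projVec_mul_projVec_of_orthonormal {d m : ℕ} {Ψ : Fin d → Fin m → ℂ}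
    (hΨ : ∀ i j, cinner (Ψ i) (Ψ j) = if i = j then 1 else 0) (i j : Fin d) :
    (projVec (Ψ i) * projVec (Ψ j)).trace = if i = j then 1 else 0 := by
  rw [trace_mul_projVec, projVec_mulVec, dotProduct_smul, ← cinner_eq_star_dotProduct, hΨ, hΨ]
  split_ifs with h h' h' <;> simp_all

theorem trace_kronecker_mul_sigmaSF {d m : ℕ} (p : Fin d → ℝ) (Ψ : Fin d → Fin m → ℂ)
    (A : Matrix (Fin d) (Fin d) ℂ) (C : Matrix (Fin m) (Fin m) ℂ) :
    ((A ⊗ₖ C) * sigmaSF p Ψ).trace = ∑ i, (p i : ℂ) * (A i i * (C * projVec (Ψ i)).trace) := by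
  rw [sigmaSF, Finset.mul_sum, trace_sum]
  refine Finset.sum_congr rfl fun i _ => ?_
  rw [Matrix.mul_smul, trace_smul, ← mul_kronecker_mul, trace_kronecker, smul_eq_mul]
  rw [matE, trace_mul_single]
  simp

namespace IsProjMeasurement

variable {ι n : Type*} [Fintype ι] [DecidableEq ι] [Fintype n] [DecidableEq n]
  {P : ι → Matrix n n ℂ}

theorem posSemidef (hP : IsProjMeasurement P) (k : ι) : (P k).PosSemidef := by
  have hsq : (P k)ᴴ * P k = P k := by simpa [(hP.1 k).eq] using hP.2.1 k k
  exact hsq ▸ posSemidef_conjTranspose_mul_self (P k)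

theorem sum_apply_self_re (hP : IsProjMeasurement P) (i : n) : ∑ k, (P k i i).re = 1 := by
  simpa [Matrix.sum_apply, Complex.re_sum] using congrArg Complex.re (congrFun (congrFun hP.2.2 i) i)

theorem sum_re_dotProduct_mulVec (hP : IsProjMeasurement P) {v : n → ℂ}
    (hv : star v ⬝ᵥ v = 1) : ∑ k, (star v ⬝ᵥ (P k *ᵥ v)).re = 1 := by
  rw [← Complex.re_sum, ← dotProduct_sum, ← sum_mulVec, hP.2.2, one_mulVec, hv, Complex.one_re]

end IsProjMeasurement

theorem trace_kronecker_projVec_mul_sigmaSF {d m : ℕ} (p : Fin d → ℝ) {Ψ : Fin d → Fin m → ℂ}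
    (hΨ : ∀ i j, cinner (Ψ i) (Ψ j) = if i = j then 1 else 0)
    (A : Matrix (Fin d) (Fin d) ℂ) (i : Fin d) :
    ((A ⊗ₖ projVec (Ψ i)) * sigmaSF p Ψ).trace = p i * A i i := by
  simp [trace_kronecker_mul_sigmaSF, trace_projVec_mul_projVec_of_orthonormal hΨ]

/-- Eq. (34) (measurement optimality): the pointer measurement `X` on the fragment is
optimal for learning about any system observable `B`: `I(B:Y) ≤ I(B:X)` for every
fragment measurement `Y`, and the joint distributions are genuine pmfs. -/
theorem stmt_15 {d m : ℕ} {L N : Type*}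
    [Fintype L] [DecidableEq L] [Fintype N] [DecidableEq N]
    (p : Fin d → ℝ) (hp0 : ∀ i, 0 ≤ p i) (hp1 : ∑ i, p i = 1)
    (Ψ : Fin d → Fin m → ℂ)
    (hΨ : ∀ i j, cinner (Ψ i) (Ψ j) = if i = j then 1 else 0)
    (B : L → Matrix (Fin d) (Fin d) ℂ) (hB : IsProjMeasurement B)
    (Y : N → Matrix (Fin m) (Fin m) ℂ) (hY : IsProjMeasurement Y)
    (pBX : L → Fin d → ℝ)
    (hBX : ∀ l i, pBX l i = (((B l ⊗ₖ projVec (Ψ i)) * sigmaSF p Ψ).trace).re)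
    (pBY : L → N → ℝ)
    (hBY : ∀ l n, pBY l n = (((B l ⊗ₖ Y n) * sigmaSF p Ψ).trace).re) :
    (∀ l i, 0 ≤ pBX l i) ∧ (∑ l, ∑ i, pBX l i = 1) ∧
    (∀ l n, 0 ≤ pBY l n) ∧ (∑ l, ∑ n, pBY l n = 1) ∧
    mutualInfo pBY ≤ mutualInfo pBX := by
  have hBdiag l i := Complex.nonneg_iff.1 ((hB.posSemidef l).diag_nonneg (i := i))
  set q : Fin d → N → ℝ := fun i n => (star (Ψ i) ⬝ᵥ (Y n *ᵥ Ψ i)).re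
  have hq0 i n : 0 ≤ q i n :=
    (Complex.nonneg_iff.1 ((hY.posSemidef n).dotProduct_mulVec_nonneg (Ψ i))).1
  have hq1 i : ∑ n, q i n = 1 := hY.sum_re_dotProduct_mulVec (by simpa using hΨ i i : cinner (Ψ i) (Ψ i) = 1)
  have hpBX l i : pBX l i = p i * (B l i i).re := by
    rw [hBX, trace_kronecker_projVec_mul_sigmaSF p hΨ, Complex.re_ofReal_mul]
  have hpBY : pBY = fun l n => ∑ i, pBX l i * q i n := by
    ext l n
    rw [hBY, trace_kronecker_mul_sigmaSF, Complex.re_sum]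
    refine Finset.sum_congr rfl fun i _ => ?_
    simp [hpBX, q, trace_mul_projVec, Complex.mul_re, ← (hBdiag l i).2, mul_assoc]
  have hpBX0 l i : 0 ≤ pBX l i := hpBX l i ▸ mul_nonneg (hp0 i) (hBdiag l i).1
  have hpBX1 : ∑ l, ∑ i, pBX l i = 1 := by
    simp only [hpBX]
    rw [Finset.sum_comm]
    simp [← Finset.mul_sum, hB.sum_apply_self_re, hp1]
  refine ⟨hpBX0, hpBX1, ?_, ?_, ?_⟩
  · exact fun l n => hpBY ▸ Finset.sum_nonneg fun i _ => mul_nonneg (hpBX0 l i) (hq0 i n)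
  · simpa only [hpBY, sum_sum_mul_stochastic pBX q hq1] using hpBX1
  · exact hpBY ▸ mutualInfo_comp_stochastic_le pBX q hpBX0 hq0 hq1
end
end
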